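/- Let 𝔇 ⊂ ℝ² be an r-uniformly discrete set, let s > 3/2 and 0 < ε < s − 3/2. Then there exists a constant C > 0 (depending on r, s, ε) such that for all x, y ∈ ℝ²: ∑_{γ ∈ 𝔇} ⟨x−γ⟩^{−(s−1)} ⟨y−γ⟩^{−s} ≤ C ⟨x−y⟩^{−(s−3/2−ε)}. -/

import Mathlib

open MeasureTheory Filter Topology

noncomputable section

abbrev R2 : Type := EuclideanSpace ℝ (Fin 2)

abbrev H2 : Type := MeasureTheory.Lp ℂ 2 (volume : Measure R2)

/-- `T` is an integral operator with kernel `k`. -/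
def HasKernel (T : H2 →L[ℂ] H2) (k : R2 → R2 → ℂ) : Prop :=
  ∀ f : H2, ∀ᵐ x : R2 ∂volume, (T f : R2 → ℂ) x = ∫ y : R2, k x y * (f : R2 → ℂ) y

/-- `P` is an orthogonal projection. -/
def IsOrthProj (P : H2 →L[ℂ] H2) : Prop := IsSelfAdjoint P ∧ P ∘L P = P

/-- `p` is a jointly continuous, exponentially localized kernel with constants `C`, `β`. -/
def IsExpLocKernel (p : R2 → R2 → ℂ) (C β : ℝ) : Prop :=
  Continuous (fun q : R2 × R2 => p q.1 q.2) ∧ 0 < C ∧ 0 < β ∧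
    ∀ x y : R2, ‖p x y‖ ≤ C * Real.exp (-β * ‖x - y‖)

/-- Hilbert-Schmidt operators on `L²(ℝ²)`. -/
def IsHilbertSchmidt (T : H2 →L[ℂ] H2) : Prop :=
  ∃ (w : Set H2) (b : HilbertBasis w ℂ H2), Summable fun i => ‖T (b i)‖ ^ 2

/-- Trace class operators, characterized as products of two Hilbert-Schmidt operators. -/
def IsTraceClass (T : H2 →L[ℂ] H2) : Prop :=
  ∃ A B : H2 →L[ℂ] H2, IsHilbertSchmidt A ∧ IsHilbertSchmidt B ∧ T = A ∘L B

def traceBasisIdx : Set H2 := (exists_hilbertBasis ℂ H2).choose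

def traceBasis : HilbertBasis traceBasisIdx ℂ H2 := (exists_hilbertBasis ℂ H2).choose_spec.choose

/-- The trace of an operator, computed in a fixed Hilbert basis of `L²(ℝ²)`.
For trace class operators this is the canonical trace for any choice of basis. -/
def opTrace (T : H2 →L[ℂ] H2) : ℂ :=
  ∑' i : traceBasisIdx, (inner ℂ (traceBasis i) (T (traceBasis i)) : ℂ)

/-- The square `Λ_L = [-L, L]²` in `ℝ²`. -/
def Lam (L : ℝ) : Set R2 := {x : R2 | |x 0| ≤ L ∧ |x 1| ≤ L}

/-- The characteristic function of `Λ_L`, with values in `ℂ`. -/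
def indL (L : ℝ) (x : R2) : ℂ := (Lam L).indicator (fun _ => (1 : ℂ)) x

/-- Formal composition of two integral kernels. -/
def kComp (k₁ k₂ : R2 → R2 → ℂ) : R2 → R2 → ℂ := fun x y => ∫ z : R2, k₁ x z * k₂ z y

/-- The kernel of the commutator `[X_i, P]`, when `P` has kernel `p`. -/
def commK (p : R2 → R2 → ℂ) (i : Fin 2) : R2 → R2 → ℂ :=
  fun x y => ((x i - y i : ℝ) : ℂ) * p x y

/-- The kernel of the double commutator `[[X₁,P],[X₂,P]]`, when `P` has kernel `p`. -/
def dcommK (p : R2 → R2 → ℂ) : R2 → R2 → ℂ :=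
  fun x y => kComp (commK p 0) (commK p 1) x y - kComp (commK p 1) (commK p 0) x y

/-- The kernel of `i χ_{Λ_L} P [[X₁,P],[X₂,P]] P χ_{Λ_L}`, when `P` has kernel `p`. -/
def chernK (p : R2 → R2 → ℂ) (L : ℝ) : R2 → R2 → ℂ :=
  fun x y => indL L x * (Complex.I * kComp p (kComp (dcommK p) p) x y) * indL L y

/-- A set `𝔇 ⊆ ℝ²` is `r`-uniformly discrete. -/
def UnifDiscrete (𝔇 : Set R2) (r : ℝ) : Prop :=
  0 < r ∧ ∀ x : R2, (𝔇 ∩ Metric.ball x r).Subsingleton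

/-- The index set of a generalized Wannier basis. -/
abbrev WIdx (𝔇 : Set R2) (m : R2 → ℕ) : Type := Σ γ : 𝔇, Fin (m (γ : R2))

/-- `w` is a generalized Wannier basis for `P`, `G`-localized around `𝔇`
with localization constant `M` and uniform multiplicity bound `mStar`. -/
def IsGWB (P : H2 →L[ℂ] H2) (𝔇 : Set R2) (m : R2 → ℕ) (mStar : ℕ)
    (w : (γ : R2) → Fin (m γ) → H2) (G : ℝ → ℝ) (M : ℝ) : Prop :=
  (∀ γ ∈ 𝔇, m γ ≤ mStar) ∧
  Orthonormal ℂ (fun σ : WIdx 𝔇 m => w (σ.1 : R2) σ.2) ∧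
  (∀ γ ∈ 𝔇, ∀ a, P (w γ a) = w γ a) ∧
  (∀ f : H2, P f = f → (∀ (γ : R2), γ ∈ 𝔇 → ∀ a, (inner ℂ (w γ a) f : ℂ) = 0) → f = 0) ∧
  (∀ γ ∈ 𝔇, ∀ a, ∫⁻ x : R2,
      (‖(w γ a : R2 → ℂ) x‖₊ : ENNReal) ^ 2 * ENNReal.ofReal (G ‖x - γ‖)
      ≤ ENNReal.ofReal M)

/-- The Japanese bracket `⟨x⟩ = (1+‖x‖²)^{1/2}` on `ℝ²`. -/
def jap (x : R2) : ℝ := Real.sqrt (1 + ‖x‖ ^ 2)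

/-- The Japanese bracket `⟨t⟩ = (1+t²)^{1/2}` on `ℝ`. -/
def japR (t : ℝ) : ℝ := Real.sqrt (1 + t ^ 2)

/-!
Write `q = s - 3/2 - ε`. Peetre's inequality `⟨x - y⟩ ≤ √2 ⟨x - γ⟩⟨y - γ⟩` trades `q` powers of
`⟨x - γ⟩⟨y - γ⟩` for `⟨x - y⟩^{-q}`. What remains, `⟨x - γ⟩^{-(1/2+ε)} ⟨y - γ⟩^{-(3/2+ε)}`, is at most
`⟨x - γ⟩^{-t} + ⟨y - γ⟩^{-t}` with `t = 2 + 2ε > 2`, and for an `r`-uniformly discrete set the sum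
of `⟨x - γ⟩^{-t}` over `γ` is bounded uniformly in `x`: by Peetre again `⟨x - γ⟩^{-t}` is comparable
to the mean of `⟨x - ·⟩^{-t}` over the ball `B(γ, r/2)`, these balls are disjoint, and
`⟨·⟩^{-t}` is integrable on `ℝ²` since `t > 2`.
-/

lemma one_le_jap (v : R2) : 1 ≤ jap v :=
  Real.one_le_sqrt.2 (le_add_of_nonneg_right (sq_nonneg _))

lemma jap_pos (v : R2) : 0 < jap v := one_pos.trans_le (one_le_jap v)

lemma jap_le_japR {v : R2} {ρ : ℝ} (h : ‖v‖ ≤ ρ) : jap v ≤ japR ρ :=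
  Real.sqrt_le_sqrt (by gcongr)

lemma jap_sub_le (u v : R2) : jap (u - v) ≤ Real.sqrt 2 * (jap u * jap v) := by
  have hsub : jap (u - v) ≤ Real.sqrt (1 + (‖u‖ + ‖v‖) ^ 2) :=
    Real.sqrt_le_sqrt (by gcongr; exact norm_sub_le u v)
  refine hsub.trans ?_
  rw [jap, jap, ← Real.sqrt_mul (by positivity), ← Real.sqrt_mul zero_le_two]
  apply Real.sqrt_le_sqrt
  nlinarith [norm_nonneg u, norm_nonneg v, sq_nonneg (‖u‖ * ‖v‖ - 1), sq_nonneg (‖u‖ - ‖v‖)]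

lemma integrable_jap_rpow_neg {t : ℝ} (ht : 2 < t) :
    Integrable (fun z : R2 => jap z ^ (-t)) := by
  refine (integrable_rpow_neg_one_add_norm_sq (E := R2) (μ := volume) (r := t)
    (by simpa using ht)).congr (Eventually.of_forall fun z => ?_)
  simp only [jap]
  rw [Real.sqrt_eq_rpow, ← Real.rpow_mul (by positivity)]
  ring_nf

lemma rpow_neg_le_mul_rpow_neg {a b K t : ℝ} (hb : 0 < b) (hK : 0 < K) (ht : 0 ≤ t)
    (h : b ≤ K * a) : a ^ (-t) ≤ K ^ t * b ^ (-t) := by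
  have ha : 0 < a := pos_of_mul_pos_right (hb.trans_le h) hK.le
  calc a ^ (-t) = K ^ t * (K * a) ^ (-t) := by
        rw [Real.mul_rpow hK.le ha.le, Real.rpow_neg hK.le, mul_inv_cancel_left₀
          (Real.rpow_pos_of_pos hK t).ne']
    _ ≤ K ^ t * b ^ (-t) :=
        mul_le_mul_of_nonneg_left (Real.rpow_le_rpow_of_nonpos hb h (neg_nonpos.2 ht))
          (by positivity)

lemma rpow_neg_mul_rpow_neg_le_add {A B a b : ℝ} (hA : 0 < A) (hB : 0 < B) (ha : 0 ≤ a)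
    (hb : 0 ≤ b) : A ^ (-a) * B ^ (-b) ≤ A ^ (-(a + b)) + B ^ (-(a + b)) := by
  rcases le_total A B with h | h
  · calc A ^ (-a) * B ^ (-b)
        ≤ A ^ (-a) * A ^ (-b) := mul_le_mul_of_nonneg_left
          (Real.rpow_le_rpow_of_nonpos hA h (neg_nonpos.2 hb)) (by positivity)
      _ = A ^ (-(a + b)) := by rw [neg_add, Real.rpow_add hA]
      _ ≤ A ^ (-(a + b)) + B ^ (-(a + b)) := le_add_of_nonneg_right (by positivity)
  · calc A ^ (-a) * B ^ (-b)
        ≤ B ^ (-a) * B ^ (-b) := mul_le_mul_of_nonneg_right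
          (Real.rpow_le_rpow_of_nonpos hB h (neg_nonpos.2 ha)) (by positivity)
      _ = B ^ (-(a + b)) := by rw [neg_add, Real.rpow_add hB]
      _ ≤ A ^ (-(a + b)) + B ^ (-(a + b)) := le_add_of_nonneg_left (by positivity)

lemma jap_rpow_mul_jap_rpow_le (u v : R2) {q a b : ℝ} (hq : 0 ≤ q) (ha : 0 ≤ a) (hb : 0 ≤ b) :
    jap u ^ (-(q + a)) * jap v ^ (-(q + b))
      ≤ Real.sqrt 2 ^ q * jap (u - v) ^ (-q) * (jap u ^ (-(a + b)) + jap v ^ (-(a + b))) := by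
  have hu := jap_pos u
  have hv := jap_pos v
  have hpeetre : (jap u * jap v) ^ (-q) ≤ Real.sqrt 2 ^ q * jap (u - v) ^ (-q) :=
    rpow_neg_le_mul_rpow_neg (jap_pos _) (by positivity) hq (jap_sub_le u v)
  calc jap u ^ (-(q + a)) * jap v ^ (-(q + b))
      = (jap u * jap v) ^ (-q) * (jap u ^ (-a) * jap v ^ (-b)) := by
        rw [neg_add, neg_add, Real.rpow_add hu, Real.rpow_add hv, Real.mul_rpow hu.le hv.le]
        ring
    _ ≤ Real.sqrt 2 ^ q * jap (u - v) ^ (-q) * (jap u ^ (-(a + b)) + jap v ^ (-(a + b))) :=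
        mul_le_mul hpeetre (rpow_neg_mul_rpow_neg_le_add hu hv ha hb)
          (mul_nonneg (Real.rpow_nonneg hu.le _) (Real.rpow_nonneg hv.le _))
          (mul_nonneg (by positivity) (Real.rpow_nonneg (jap_pos _).le _))

lemma sum_setIntegral_le_integral {X ι : Type*} [MeasurableSpace X] {μ : Measure X}
    {f : X → ℝ} (hf : Integrable f μ) (hf0 : 0 ≤ f) (F : Finset ι) {A : ι → Set X}
    (hA : ∀ i, MeasurableSet (A i)) (hdisj : Pairwise (Function.onFun Disjoint A)) :
    ∑ i ∈ F, ∫ x in A i, f x ∂μ ≤ ∫ x, f x ∂μ := by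
  rw [← integral_biUnion_finset F (fun i _ => hA i) (hdisj.set_pairwise _)
    (fun i _ => hf.integrableOn)]
  exact setIntegral_le_integral hf (Eventually.of_forall hf0)

lemma jap_rpow_neg_le_setIntegral_ball {t ρ : ℝ} (ht : 2 < t) (x γ : R2) :
    volume.real (Metric.ball γ ρ) * jap (x - γ) ^ (-t)
      ≤ (Real.sqrt 2 * japR ρ) ^ t * ∫ z in Metric.ball γ ρ, jap (x - z) ^ (-t) := by
  have hK : 0 < Real.sqrt 2 * japR ρ := mul_pos (by positivity) (Real.sqrt_pos.2 (by positivity))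
  have hcomp : ∀ z ∈ Metric.ball γ ρ,
      jap (x - γ) ^ (-t) ≤ (Real.sqrt 2 * japR ρ) ^ t * jap (x - z) ^ (-t) := by
    intro z hz
    refine rpow_neg_le_mul_rpow_neg (jap_pos _) hK (by linarith) ?_
    have hpeetre := jap_sub_le (x - γ) (z - γ)
    rw [sub_sub_sub_cancel_right] at hpeetre
    refine hpeetre.trans ?_
    have hzγ : jap (z - γ) ≤ japR ρ :=
      jap_le_japR (by rw [← dist_eq_norm]; exact (Metric.mem_ball.1 hz).le)
    calc Real.sqrt 2 * (jap (x - γ) * jap (z - γ)) ≤ Real.sqrt 2 * (jap (x - γ) * japR ρ) := by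
          gcongr; exact (jap_pos _).le
      _ = Real.sqrt 2 * japR ρ * jap (x - γ) := by ring
  have hint : Integrable (fun z : R2 => jap (x - z) ^ (-t)) :=
    (integrable_comp_sub_left (fun z : R2 => jap z ^ (-t)) x).2 (integrable_jap_rpow_neg ht)
  rw [← integral_const_mul, ← smul_eq_mul, ← setIntegral_const]
  exact setIntegral_mono_on (integrableOn_const measure_ball_lt_top.ne)
    (hint.const_mul _).integrableOn measurableSet_ball hcomp

namespace UnifDiscrete

variable {𝔇 : Set R2} {r : ℝ}

lemma le_dist (h : UnifDiscrete 𝔇 r) {a b : R2} (ha : a ∈ 𝔇) (hb : b ∈ 𝔇) (hne : a ≠ b) :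
    r ≤ dist a b := by
  by_contra! hlt
  exact hne (h.2 a ⟨ha, Metric.mem_ball_self h.1⟩ ⟨hb, Metric.mem_ball'.2 hlt⟩)

lemma pairwise_disjoint_ball (h : UnifDiscrete 𝔇 r) :
    Pairwise (Function.onFun Disjoint fun γ : 𝔇 => Metric.ball (γ : R2) (r / 2)) := by
  intro γ₁ γ₂ hne
  apply Metric.ball_disjoint_ball
  have := h.le_dist γ₁.2 γ₂.2 (Subtype.coe_injective.ne hne)
  linarith

lemma sum_jap_rpow_neg_le (h : UnifDiscrete 𝔇 r) {t : ℝ} (ht : 2 < t) (x : R2)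
    (F : Finset 𝔇) :
    ∑ γ ∈ F, jap (x - γ) ^ (-t)
      ≤ (Real.sqrt 2 * japR (r / 2)) ^ t * (∫ z : R2, jap z ^ (-t))
        / volume.real (Metric.ball (0 : R2) (r / 2)) := by
  have hV : 0 < volume.real (Metric.ball (0 : R2) (r / 2)) :=
    ENNReal.toReal_pos (Metric.measure_ball_pos volume 0 (half_pos h.1)).ne'
      measure_ball_lt_top.ne
  have hball : ∀ γ : R2, volume.real (Metric.ball γ (r / 2))
      = volume.real (Metric.ball (0 : R2) (r / 2)) := fun γ => by
    simp only [measureReal_def, Measure.addHaar_ball_center]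
  rw [le_div_iff₀' hV, Finset.mul_sum, ← integral_sub_left_eq_self _ volume x]
  calc ∑ γ ∈ F, volume.real (Metric.ball (0 : R2) (r / 2)) * jap (x - γ) ^ (-t)
      ≤ ∑ γ ∈ F, (Real.sqrt 2 * japR (r / 2)) ^ t
          * ∫ z in Metric.ball (γ : R2) (r / 2), jap (x - z) ^ (-t) :=
        Finset.sum_le_sum fun γ _ => hball γ ▸ jap_rpow_neg_le_setIntegral_ball ht x γ
    _ ≤ (Real.sqrt 2 * japR (r / 2)) ^ t * ∫ z : R2, jap (x - z) ^ (-t) := by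
        rw [← Finset.mul_sum]
        refine mul_le_mul_of_nonneg_left ?_
          (Real.rpow_nonneg (mul_nonneg (Real.sqrt_nonneg _) (Real.sqrt_nonneg _)) _)
        exact sum_setIntegral_le_integral
          ((integrable_comp_sub_left (fun z : R2 => jap z ^ (-t)) x).2
            (integrable_jap_rpow_neg ht))
          (fun z => Real.rpow_nonneg (jap_pos _).le _) F (fun _ => measurableSet_ball)
          h.pairwise_disjoint_ball

lemma exists_tsum_jap_rpow_neg_le (h : UnifDiscrete 𝔇 r) {t : ℝ} (ht : 2 < t) :
    ∃ S > 0, ∀ x : R2,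
      Summable (fun γ : 𝔇 => jap (x - γ) ^ (-t)) ∧ ∑' γ : 𝔇, jap (x - γ) ^ (-t) ≤ S := by
  set S := (Real.sqrt 2 * japR (r / 2)) ^ t * (∫ z : R2, jap z ^ (-t))
    / volume.real (Metric.ball (0 : R2) (r / 2))
  refine ⟨max S 1, by positivity, fun x => ?_⟩
  have hfin (F : Finset 𝔇) : ∑ γ ∈ F, jap (x - γ) ^ (-t) ≤ max S 1 :=
    (h.sum_jap_rpow_neg_le ht x F).trans (le_max_left _ _)
  have hsum := summable_of_sum_le (fun γ => Real.rpow_nonneg (jap_pos _).le _) hfin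
  exact ⟨hsum, hsum.tsum_le_of_sum_le hfin⟩

end UnifDiscrete

theorem statement_17_general
    (𝔇 : Set R2) (r : ℝ) (h𝔇 : UnifDiscrete 𝔇 r)
    (s : ℝ) (ε : ℝ) (hε0 : 0 < ε) (hε : ε < s - 3 / 2) :
    ∃ C : ℝ, 0 < C ∧ ∀ x y : R2,
      Summable (fun γ : 𝔇 => jap (x - (γ : R2)) ^ (-(s - 1)) * jap (y - (γ : R2)) ^ (-s)) ∧
      ∑' γ : 𝔇, jap (x - (γ : R2)) ^ (-(s - 1)) * jap (y - (γ : R2)) ^ (-s)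
        ≤ C * jap (x - y) ^ (-(s - 3 / 2 - ε)) := by
  set t := 1 / 2 + ε + (3 / 2 + ε) with ht_def
  obtain ⟨S, hS0, hS⟩ := h𝔇.exists_tsum_jap_rpow_neg_le (t := t) (by linarith)
  set q := s - 3 / 2 - ε with hq_def
  have hq : 0 ≤ q := by linarith
  refine ⟨Real.sqrt 2 ^ q * (2 * S), by positivity, fun x y => ?_⟩
  obtain ⟨hx, hxS⟩ := hS x
  obtain ⟨hy, hyS⟩ := hS y
  set K := Real.sqrt 2 ^ q * jap (x - y) ^ (-q)
  have hK : 0 ≤ K := mul_nonneg (by positivity) (Real.rpow_nonneg (jap_pos _).le _)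
  have hbound (γ : 𝔇) : jap (x - γ) ^ (-(s - 1)) * jap (y - γ) ^ (-s)
      ≤ K * (jap (x - γ) ^ (-t) + jap (y - γ) ^ (-t)) := by
    have := jap_rpow_mul_jap_rpow_le (x - γ) (y - γ) hq (a := 1 / 2 + ε) (b := 3 / 2 + ε)
      (by linarith) (by linarith)
    rwa [sub_sub_sub_cancel_right, show q + (1 / 2 + ε) = s - 1 by ring,
      show q + (3 / 2 + ε) = s by ring] at this
  have hsum : Summable fun γ : 𝔇 => jap (x - γ) ^ (-(s - 1)) * jap (y - γ) ^ (-s) :=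
    ((hx.add hy).mul_left K).of_nonneg_of_le
      (fun γ => mul_nonneg (Real.rpow_nonneg (jap_pos _).le _) (Real.rpow_nonneg (jap_pos _).le _))
      hbound
  refine ⟨hsum, ?_⟩
  calc ∑' γ : 𝔇, jap (x - γ) ^ (-(s - 1)) * jap (y - γ) ^ (-s)
      ≤ K * (∑' γ : 𝔇, jap (x - γ) ^ (-t) + ∑' γ : 𝔇, jap (y - γ) ^ (-t)) := by
        rw [← hx.tsum_add hy, ← (hx.add hy).tsum_mul_left]
        exact hsum.tsum_le_tsum hbound ((hx.add hy).mul_left K)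
    _ ≤ K * (2 * S) := by gcongr; linarith
    _ = Real.sqrt 2 ^ q * (2 * S) * jap (x - y) ^ (-q) := by ring

/-- for an `r`-uniformly discrete set `𝔇 ⊆ ℝ²`, `s > 3/2` and `0 < ε < s - 3/2`,
there is `C > 0` with `∑_{γ∈𝔇} ⟨x-γ⟩^{-(s-1)} ⟨y-γ⟩^{-s} ≤ C ⟨x-y⟩^{-(s-3/2-ε)}` for all
`x, y ∈ ℝ²`. -/
theorem statement_17
    (𝔇 : Set R2) (r : ℝ) (h𝔇 : UnifDiscrete 𝔇 r)
    (s : ℝ) (hs : 3 / 2 < s) (ε : ℝ) (hε0 : 0 < ε) (hε : ε < s - 3 / 2) :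
    ∃ C : ℝ, 0 < C ∧ ∀ x y : R2,
      Summable (fun γ : 𝔇 => jap (x - (γ : R2)) ^ (-(s - 1)) * jap (y - (γ : R2)) ^ (-s)) ∧
      ∑' γ : 𝔇, jap (x - (γ : R2)) ^ (-(s - 1)) * jap (y - (γ : R2)) ^ (-s)
        ≤ C * jap (x - y) ^ (-(s - 3 / 2 - ε)) :=
  statement_17_general 𝔇 r h𝔇 s ε hε0 hε

end
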